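/- In the setting of two homogeneous viruses on the same strongly connected graph with δ¹/β¹ = δ²/β², any coexisting equilibrium (x̃¹, x̃²) with x̃¹, x̃² > 0 and x̃¹ + x̃² ≪ 1 satisfies x̃¹ ≫ 0, x̃² ≫ 0, and x̃¹ = α x̃² for some constant α > 0. -/

import Mathlib

open Matrix

/-- A square matrix is irreducible if for every proper nonempty subset `S` of indices
there are `i ∈ S` and `j ∉ S` with `M i j ≠ 0`. -/
def MatIrred {n : ℕ} (M : Matrix (Fin n) (Fin n) ℝ) : Prop :=
  ∀ S : Finset (Fin n), S.Nonempty → S ≠ Finset.univ →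
    ∃ i ∈ S, ∃ j, j ∉ S ∧ M i j ≠ 0

/-- Spectral abscissa: the largest real part among the (complex) eigenvalues. -/
noncomputable def specAbs {n : ℕ} (M : Matrix (Fin n) (Fin n) ℝ) : ℝ :=
  sSup (Complex.re '' spectrum ℂ (M.map (Complex.ofReal)))

/-- Spectral radius: the largest modulus among the (complex) eigenvalues. -/
noncomputable def specRad {n : ℕ} (M : Matrix (Fin n) (Fin n) ℝ) : ℝ :=
  sSup ((fun z : ℂ => ‖z‖) '' spectrum ℂ (M.map (Complex.ofReal)))

/-!
For `M = (I - X̃¹ - X̃²) A` the equilibrium equations say that `x̃¹` and `x̃²` are nonnegative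
eigenvectors of `M` for the common eigenvalue `δ¹/β¹ = δ²/β²`, and `M` is nonnegative and
irreducible because the diagonal factor is positive. For such a matrix the zero set of a
nonnegative eigenvector is a closed class, hence empty; and if `α` is the least ratio
`x̃¹ᵢ / x̃²ᵢ`, then `x̃¹ - α x̃²` is a nonnegative eigenvector with a zero entry, hence zero.
-/

namespace MatIrred

variable {n : ℕ} {M : Matrix (Fin n) (Fin n) ℝ}

theorem diagonal_mul (hM : MatIrred M) {d : Fin n → ℝ} (hd : ∀ i, d i ≠ 0) :
    MatIrred (diagonal d * M) := by
  intro S hS hSuniv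
  obtain ⟨i, hiS, j, hjS, hij⟩ := hM S hS hSuniv
  exact ⟨i, hiS, j, hjS, by simpa [diagonal_mul] using ⟨hd i, hij⟩⟩

theorem pos_of_mulVec_eq_smul (hM : MatIrred M) (hM0 : ∀ i j, 0 ≤ M i j) {c : ℝ}
    {x : Fin n → ℝ} (hx : ∀ i, 0 ≤ x i) (hx0 : x ≠ 0) (hex : M *ᵥ x = c • x) (i : Fin n) :
    0 < x i := by
  classical
  by_contra! hi
  set T := Finset.univ.filter fun k => x k = 0
  have hT : T.Nonempty := ⟨i, by simp [T, le_antisymm hi (hx i)]⟩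
  have hTuniv : T ≠ Finset.univ := fun h =>
    hx0 (funext fun k => by simpa [T] using (h.symm ▸ Finset.mem_univ k : k ∈ T))
  obtain ⟨k, hkT, j, hjT, hkj⟩ := hM T hT hTuniv
  have hxk : x k = 0 := by simpa [T] using hkT
  have hxj : 0 < x j := (hx j).lt_of_ne' (by simpa [T] using hjT)
  have hMxk : 0 < (M *ᵥ x) k :=
    Finset.sum_pos' (fun l _ => mul_nonneg (hM0 k l) (hx l))
      ⟨j, Finset.mem_univ j, mul_pos ((hM0 k j).lt_of_ne' hkj) hxj⟩
  simp [hex, hxk] at hMxk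

theorem exists_pos_smul_eq_of_mulVec_eq_smul (hM : MatIrred M) (hM0 : ∀ i j, 0 ≤ M i j)
    {c : ℝ} {x y : Fin n → ℝ} (hx : ∀ i, 0 ≤ x i) (hy : ∀ i, 0 ≤ y i) (hx0 : x ≠ 0)
    (hy0 : y ≠ 0) (hex : M *ᵥ x = c • x) (hey : M *ᵥ y = c • y) :
    ∃ α : ℝ, 0 < α ∧ x = α • y := by
  have hxpos := hM.pos_of_mulVec_eq_smul hM0 hx hx0 hex
  have hypos := hM.pos_of_mulVec_eq_smul hM0 hy hy0 hey
  obtain ⟨i, -⟩ := Function.ne_iff.mp hx0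
  have : Nonempty (Fin n) := ⟨i⟩
  obtain ⟨i₀, hi₀⟩ := Finite.exists_min fun i => x i / y i
  set α := x i₀ / y i₀
  refine ⟨α, div_pos (hxpos i₀) (hypos i₀), ?_⟩
  have hz : ∀ i, 0 ≤ (x - α • y) i := fun i => by
    have := (le_div_iff₀ (hypos i)).mp (hi₀ i)
    simp only [Pi.sub_apply, Pi.smul_apply, smul_eq_mul]
    linarith
  have hez : M *ᵥ (x - α • y) = c • (x - α • y) := by
    rw [mulVec_sub, mulVec_smul, hex, hey, smul_sub, smul_comm]
  by_contra hne
  have := hM.pos_of_mulVec_eq_smul hM0 hz (sub_ne_zero.mpr hne) hez i₀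
  simp [α, div_mul_cancel₀ _ (hypos i₀).ne'] at this

end MatIrred

theorem stmt12_general {n : ℕ} (A : Matrix (Fin n) (Fin n) ℝ)
    (hA : ∀ i j, 0 ≤ A i j) (hirr : MatIrred A)
    (δ1 β1 δ2 β2 : ℝ)
    (hratio : δ1 / β1 = δ2 / β2)
    (x1 x2 : Fin n → ℝ)
    (hx1 : ∀ i, 0 ≤ x1 i) (hx2 : ∀ i, 0 ≤ x2 i)
    (hx1ne : x1 ≠ 0) (hx2ne : x2 ≠ 0)
    (hsum : ∀ i, x1 i + x2 i < 1)
    (he1 : (((1 : Matrix (Fin n) (Fin n) ℝ) - Matrix.diagonal x1 - Matrix.diagonal x2)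
      * A).mulVec x1 = (δ1 / β1) • x1)
    (he2 : (((1 : Matrix (Fin n) (Fin n) ℝ) - Matrix.diagonal x1 - Matrix.diagonal x2)
      * A).mulVec x2 = (δ2 / β2) • x2) :
    (∀ i, 0 < x1 i) ∧ (∀ i, 0 < x2 i) ∧ ∃ α : ℝ, 0 < α ∧ x1 = α • x2 := by
  have hd : ∀ i, 0 < 1 - x1 i - x2 i := fun i => by linarith [hsum i]
  have hD : (1 - diagonal x1 - diagonal x2 : Matrix (Fin n) (Fin n) ℝ) =
      diagonal fun i => 1 - x1 i - x2 i := by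
    rw [← diagonal_one, diagonal_sub, diagonal_sub]
  rw [hD, hratio] at he1
  rw [hD] at he2
  have hMirr := hirr.diagonal_mul fun i => (hd i).ne'
  have hM0 : ∀ i j, 0 ≤ (diagonal (fun i => 1 - x1 i - x2 i) * A) i j := fun i j => by
    rw [diagonal_mul]
    exact mul_nonneg (hd i).le (hA i j)
  exact ⟨hMirr.pos_of_mulVec_eq_smul hM0 hx1 hx1ne he1,
    hMirr.pos_of_mulVec_eq_smul hM0 hx2 hx2ne he2,
    hMirr.exists_pos_smul_eq_of_mulVec_eq_smul hM0 hx1 hx2 hx1ne hx2ne he1 he2⟩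

theorem stmt12 {n : ℕ} (A : Matrix (Fin n) (Fin n) ℝ)
    (hA : ∀ i j, 0 ≤ A i j) (hirr : MatIrred A) (hdiag : ∀ i, 0 < A i i)
    (δ1 β1 δ2 β2 : ℝ) (hδ1 : 0 < δ1) (hβ1 : 0 < β1) (hδ2 : 0 < δ2) (hβ2 : 0 < β2)
    (hratio : δ1 / β1 = δ2 / β2)
    (x1 x2 : Fin n → ℝ)
    (hx1 : ∀ i, 0 ≤ x1 i) (hx2 : ∀ i, 0 ≤ x2 i)
    (hx1ne : x1 ≠ 0) (hx2ne : x2 ≠ 0)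
    (hsum : ∀ i, x1 i + x2 i < 1)
    (he1 : (((1 : Matrix (Fin n) (Fin n) ℝ) - Matrix.diagonal x1 - Matrix.diagonal x2)
      * A).mulVec x1 = (δ1 / β1) • x1)
    (he2 : (((1 : Matrix (Fin n) (Fin n) ℝ) - Matrix.diagonal x1 - Matrix.diagonal x2)
      * A).mulVec x2 = (δ2 / β2) • x2) :
    (∀ i, 0 < x1 i) ∧ (∀ i, 0 < x2 i) ∧ ∃ α : ℝ, 0 < α ∧ x1 = α • x2 :=
  stmt12_general A hA hirr δ1 β1 δ2 β2 hratio x1 x2 hx1 hx2 hx1ne hx2ne hsum he1 he2
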